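/- In the ATL analogue of the chain models, the one-variable ATL formula A'_m = χ'_m ∧ ⟨⟨AG⟩⟩X ⟨⟨∅⟩⟩□¬p (with χ'₀ = ⟨⟨∅⟩⟩□p, χ'_{k+1} = p ∧ ⟨⟨AG⟩⟩X(¬p ∧ ⟨⟨AG⟩⟩X χ'_k)) is true at a state x of the concurrent game model M'_k if and only if k = m and x is the root r_k. -/

import Mathlib

/-- Concurrent game models over a set of agents Ag. -/
structure CGM (Ag S : Type) where
  Act : Type
  act : Ag → S → Set Act
  act_nonempty : ∀ a s, (act a s).Nonempty
  tr : S → (Ag → Act) → S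
  val : ℕ → S → Prop

/-- ATL formulas: ⟨⟨C⟩⟩X, ⟨⟨C⟩⟩□, ⟨⟨C⟩⟩U, with coalitions C ⊆ Ag. -/
inductive ATL (Ag : Type) : Type where
  | var : ℕ → ATL Ag
  | bot : ATL Ag
  | imp : ATL Ag → ATL Ag → ATL Ag
  | cnext : Set Ag → ATL Ag → ATL Ag
  | cbox : Set Ag → ATL Ag → ATL Ag
  | cuntil : Set Ag → ATL Ag → ATL Ag → ATL Ag

def ATL.neg {Ag : Type} (φ : ATL Ag) : ATL Ag := .imp φ .bot
def ATL.conj {Ag : Type} (φ ψ : ATL Ag) : ATL Ag := ATL.neg (.imp φ (ATL.neg ψ))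
def ATL.iffc {Ag : Type} (φ ψ : ATL Ag) : ATL Ag := ATL.conj (.imp φ ψ) (.imp ψ φ)

/-- An action profile available at s. -/
def profOK {Ag S : Type} (M : CGM Ag S) (s : S) (α : Ag → M.Act) : Prop :=
  ∀ a, α a ∈ M.act a s

/-- A (history-based) strategy: given the past history and the current state,
choose an action for each agent. -/
def Strat {Ag S : Type} (M : CGM Ag S) : Type := Ag → List S → S → M.Act

def stratOK {Ag S : Type} (M : CGM Ag S) (str : Strat M) : Prop :=
  ∀ a h s, str a h s ∈ M.act a s

/-- The history of π strictly before step j. -/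
def hist {S : Type} (π : ℕ → S) (j : ℕ) : List S := (List.range j).map π

/-- Π(s, str_C): paths starting at s resulting when the agents in C follow str. -/
def outPaths {Ag S : Type} (M : CGM Ag S) (C : Set Ag) (str : Strat M) (s : S) :
    Set (ℕ → S) :=
  { π | π 0 = s ∧ ∀ j, ∃ α, profOK M (π j) α ∧
      (∀ a ∈ C, α a = str a (hist π j) (π j)) ∧ π (j + 1) = M.tr (π j) α }

/-- ATL satisfaction in concurrent game models. -/
def asat {Ag S : Type} (M : CGM Ag S) : ATL Ag → S → Prop
  | .var n, s => M.val n s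
  | .bot, _ => False
  | .imp a b, s => asat M a s → asat M b s
  | .cnext C a, s => ∃ αC : Ag → M.Act, (∀ c ∈ C, αC c ∈ M.act c s) ∧
      ∀ α, profOK M s α → (∀ c ∈ C, α c = αC c) → asat M a (M.tr s α)
  | .cbox C a, s => ∃ str : Strat M, stratOK M str ∧
      ∀ π ∈ outPaths M C str s, ∀ i, asat M a (π i)
  | .cuntil C a b, s => ∃ str : Strat M, stratOK M str ∧
      ∀ π ∈ outPaths M C str s, ∃ i, asat M b (π i) ∧ ∀ j, j < i → asat M a (π j)

/-- Satisfiability in a concurrent game model over the fixed agent set Ag. -/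
def asatisfiable (Ag : Type) (φ : ATL Ag) : Prop :=
  ∃ (S : Type) (M : CGM Ag S) (s : S), asat M φ s

def aoccurs {Ag : Type} (q : ℕ) : ATL Ag → Prop
  | .var n => n = q
  | .bot => False
  | .imp a b => aoccurs q a ∨ aoccurs q b
  | .cnext _ a => aoccurs q a
  | .cbox _ a => aoccurs q a
  | .cuntil _ a b => aoccurs q a ∨ aoccurs q b

/-- p is true exactly at the root (state 0) and the even-indexed chain states
a_{2j} (state 2j+1); state 1 is b, state i+1 is a_i for 1 ≤ i ≤ 2k. -/
def chainVal (k : ℕ) (s : Fin (2 * k + 2)) : Prop :=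
  s.val = 0 ∨ (3 ≤ s.val ∧ s.val % 2 = 1)

/-- One-step successor function of the concurrent game chain model M'_k: the root
chooses between b and a₁ according to the boolean action c; each a_i (i < 2k)
chooses between its self-loop and a_{i+1}; b and a_{2k} only have self-loops. -/
def chainSucc (k : ℕ) (hk : 1 ≤ k) (s : Fin (2 * k + 2)) (c : Bool) : Fin (2 * k + 2) :=
  if s.val = 0 then (if c then ⟨1, by omega⟩ else ⟨2, by omega⟩)
  else if h : 2 ≤ s.val ∧ s.val ≤ 2 * k then (if c then s else ⟨s.val + 1, by omega⟩)
  else s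

/-- The concurrent game version M'_k of the chain model M_k: every agent has all
(boolean) actions available everywhere, and the transition function realizes the
edges of M_k. -/
noncomputable def atlChain (Ag : Type) [Nonempty Ag] (k : ℕ) (hk : 1 ≤ k) : CGM Ag (Fin (2 * k + 2)) where
  Act := Bool
  act _ _ := Set.univ
  act_nonempty _ _ := ⟨true, trivial⟩
  tr s α := chainSucc k hk s (α (Classical.arbitrary Ag))
  val n s := n = 0 ∧ chainVal k s

/-- χ'₀ = ⟨⟨∅⟩⟩□p, χ'_{k+1} = p ∧ ⟨⟨AG⟩⟩X(¬p ∧ ⟨⟨AG⟩⟩X χ'_k); p is var 0. -/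
def chiA (Ag : Type) : ℕ → ATL Ag
  | 0 => .cbox ∅ (.var 0)
  | k + 1 => ATL.conj (.var 0)
      (.cnext Set.univ (ATL.conj (ATL.neg (.var 0)) (.cnext Set.univ (chiA Ag k))))

/-- A'_m = χ'_m ∧ ⟨⟨AG⟩⟩X ⟨⟨∅⟩⟩□¬p. -/
def AformA (Ag : Type) (m : ℕ) : ATL Ag :=
  ATL.conj (chiA Ag m) (.cnext Set.univ (.cbox ∅ (ATL.neg (.var 0))))

/-- B'_m = ⟨⟨AG⟩⟩X A'_m. -/
def BformA (Ag : Type) (m : ℕ) : ATL Ag := .cnext Set.univ (AformA Ag m)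

/-! In `M'_k` the grand coalition can force any single successor while the empty coalition
forces nothing, so `⟨⟨AG⟩⟩X φ` holds where some successor satisfies `φ` and `⟨⟨∅⟩⟩□φ` where every
reachable state does. Hence `⟨⟨∅⟩⟩□p` holds only at the sink `a_{2k}` and `⟨⟨∅⟩⟩□¬p` only at the
sink `b`. Each unfolding of `χ'` moves two states back down the chain, so `χ'_j` holds exactly at
`a_{2(k-j)}` for `j < k` and at the root for `j = k`. Finally `b` is a successor only of itself and
of the root, so the conjunct `⟨⟨AG⟩⟩X⟨⟨∅⟩⟩□¬p` leaves only the root, where `χ'_m` holds iff `m = k`.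
-/

namespace CGM

variable {Ag S : Type} (M : CGM Ag S)

def Step (s t : S) : Prop := ∃ α, profOK M s α ∧ M.tr s α = t

theorem exists_step (s : S) : ∃ t, M.Step s t :=
  ⟨_, fun a => (M.act_nonempty a s).some, fun a => (M.act_nonempty a s).some_mem, rfl⟩

theorem exists_stratOK : ∃ str : Strat M, stratOK M str :=
  ⟨fun a _ s => (M.act_nonempty a s).some, fun a _ s => (M.act_nonempty a s).some_mem⟩

variable {M}

theorem mem_outPaths_empty_iff (str : Strat M) (s : S) (π : ℕ → S) :
    π ∈ outPaths M ∅ str s ↔ π 0 = s ∧ ∀ j, M.Step (π j) (π (j + 1)) := by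
  simp only [outPaths, Step, Set.mem_ofPred_eq, Set.mem_empty_iff_false, false_imp_iff,
    implies_true, true_and, eq_comm (a := π (_ + 1))]

theorem exists_path_of_reflTransGen {s t : S} (h : Relation.ReflTransGen M.Step s t) :
    ∃ π : ℕ → S, π 0 = s ∧ (∀ j, M.Step (π j) (π (j + 1))) ∧ ∃ i, π i = t := by
  induction h using Relation.ReflTransGen.head_induction_on with
  | refl =>
    choose next hnext using M.exists_step
    exact ⟨fun i => next^[i] t, rfl, fun j => by
      simpa only [Function.iterate_succ_apply'] using hnext (next^[j] t), 0, rfl⟩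
  | @head s u hsu _ ih =>
    obtain ⟨π, hπ0, hπ, i, hi⟩ := ih
    refine ⟨fun j => Nat.casesOn j s π, rfl, ?_, i + 1, hi⟩
    rintro (_ | j)
    · simpa [hπ0] using hsu
    · exact hπ j

end CGM

section Semantics

variable {Ag S : Type} (M : CGM Ag S)

theorem asat_neg (φ : ATL Ag) (s : S) : asat M (ATL.neg φ) s ↔ ¬asat M φ s :=
  Iff.rfl

theorem asat_conj (φ ψ : ATL Ag) (s : S) :
    asat M (ATL.conj φ ψ) s ↔ asat M φ s ∧ asat M ψ s := by
  simp only [ATL.conj, ATL.neg, asat]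
  tauto

theorem asat_cnext_univ_iff (φ : ATL Ag) (s : S) :
    asat M (.cnext Set.univ φ) s ↔ ∃ t, M.Step s t ∧ asat M φ t := by
  constructor
  · rintro ⟨α, hα, h⟩
    exact ⟨_, ⟨α, fun a => hα a trivial, rfl⟩, h α (fun a => hα a trivial) fun _ _ => rfl⟩
  · rintro ⟨_, ⟨α, hα, rfl⟩, h⟩
    refine ⟨α, fun a _ => hα a, fun β _ hβ => ?_⟩
    rwa [funext fun a => hβ a trivial]

theorem asat_cbox_empty_iff (φ : ATL Ag) (s : S) :
    asat M (.cbox ∅ φ) s ↔ ∀ t, Relation.ReflTransGen M.Step s t → asat M φ t := by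
  constructor
  · rintro ⟨str, -, h⟩ t hst
    obtain ⟨π, hπ0, hπ, i, rfl⟩ := CGM.exists_path_of_reflTransGen hst
    exact h π ((CGM.mem_outPaths_empty_iff str s π).2 ⟨hπ0, hπ⟩) i
  · intro h
    obtain ⟨str, hstr⟩ := M.exists_stratOK
    refine ⟨str, hstr, fun π hπ i => h _ ?_⟩
    obtain ⟨hπ0, hπ⟩ := (CGM.mem_outPaths_empty_iff str s π).1 hπ
    induction i with
    | zero => exact hπ0 ▸ .refl
    | succ i ih => exact ih.tail (hπ i)

end Semantics

section ChainModel

variable {Ag : Type} [Nonempty Ag] {k : ℕ} {hk : 1 ≤ k}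

theorem atlChain_step_iff (s t : Fin (2 * k + 2)) :
    (atlChain Ag k hk).Step s t ↔ ∃ c, chainSucc k hk s c = t :=
  ⟨fun ⟨_, _, h⟩ => ⟨_, h⟩, fun ⟨c, h⟩ => ⟨fun _ => c, fun _ => trivial, h⟩⟩

theorem asat_atlChain_var_zero (s : Fin (2 * k + 2)) :
    asat (atlChain Ag k hk) (.var 0) s ↔ chainVal k s :=
  and_iff_right rfl

theorem asat_atlChain_cnext_univ_iff (φ : ATL Ag) (s : Fin (2 * k + 2)) :
    asat (atlChain Ag k hk) (.cnext Set.univ φ) s ↔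
      ∃ c, asat (atlChain Ag k hk) φ (chainSucc k hk s c) := by
  simp only [asat_cnext_univ_iff, atlChain_step_iff]
  exact ⟨fun ⟨_, ⟨c, hc⟩, h⟩ => ⟨c, hc ▸ h⟩, fun ⟨c, h⟩ => ⟨_, ⟨c, rfl⟩, h⟩⟩

theorem val_chainSucc_true (s : Fin (2 * k + 2)) :
    (chainSucc k hk s true).val = if s.val = 0 then 1 else s.val := by
  unfold chainSucc
  split_ifs <;> simp_all

theorem val_chainSucc_false (s : Fin (2 * k + 2)) :
    (chainSucc k hk s false).val =
      if s.val = 0 then 2 else if 2 ≤ s.val ∧ s.val ≤ 2 * k then s.val + 1 else s.val := by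
  unfold chainSucc
  split_ifs <;> simp_all

theorem chainSucc_eq_self (s : Fin (2 * k + 2)) (hs : s.val = 1 ∨ s.val = 2 * k + 1)
    (c : Bool) : chainSucc k hk s c = s := by
  apply Fin.ext
  cases c <;> simp only [val_chainSucc_true, val_chainSucc_false] <;> split_ifs <;> omega

theorem eq_of_reflTransGen_atlChain_step {s t : Fin (2 * k + 2)}
    (hs : s.val = 1 ∨ s.val = 2 * k + 1)
    (h : Relation.ReflTransGen (atlChain Ag k hk).Step s t) : t = s := by
  induction h with
  | refl => rfl
  | tail _ hst ih =>
    obtain ⟨c, rfl⟩ := (atlChain_step_iff _ _).1 hst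
    rw [ih, chainSucc_eq_self s hs]

theorem reflTransGen_atlChain_step_last (s : Fin (2 * k + 2)) (hs : 2 ≤ s.val) :
    Relation.ReflTransGen (atlChain Ag k hk).Step s (Fin.last _) := by
  obtain ⟨n, hn⟩ : ∃ n, s.val + n = 2 * k + 1 :=
    ⟨_, Nat.add_sub_of_le (Nat.le_of_lt_succ s.isLt)⟩
  induction n generalizing s with
  | zero =>
    obtain rfl : s = Fin.last _ := Fin.ext (by simpa using hn)
    exact .refl
  | succ n ih =>
    have hnext : (chainSucc k hk s false).val = s.val + 1 := by
      rw [val_chainSucc_false, if_neg (by omega), if_pos (by omega)]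
    exact .head ((atlChain_step_iff _ _).2 ⟨false, rfl⟩)
      (ih (chainSucc k hk s false) (by omega) (by omega))

theorem asat_atlChain_cbox_empty_var_zero_iff (s : Fin (2 * k + 2)) :
    asat (atlChain Ag k hk) (.cbox ∅ (.var 0)) s ↔ s.val = 2 * k + 1 := by
  simp only [asat_cbox_empty_iff, asat_atlChain_var_zero]
  constructor
  · intro h
    have hs := h s .refl
    have hsucc := h _ (.single ((atlChain_step_iff _ _).2 ⟨false, rfl⟩))
    unfold chainVal at hs hsucc
    rw [val_chainSucc_false] at hsucc
    have := s.isLt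
    split_ifs at hsucc <;> simp_all <;> omega
  · intro hs t hst
    rw [eq_of_reflTransGen_atlChain_step (.inr hs) hst, chainVal]
    omega

theorem asat_atlChain_cbox_empty_neg_var_zero_iff (s : Fin (2 * k + 2)) :
    asat (atlChain Ag k hk) (.cbox ∅ (ATL.neg (.var 0))) s ↔ s.val = 1 := by
  simp only [asat_cbox_empty_iff, asat_neg, asat_atlChain_var_zero]
  constructor
  · intro h
    by_contra hs
    rcases Nat.lt_or_ge s.val 2 with hs2 | hs2
    · exact h s .refl (.inl (by omega))
    · exact h _ (reflTransGen_atlChain_step_last s hs2) (.inr ⟨by simp; omega, by simp⟩)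
  · intro hs t hst
    rw [eq_of_reflTransGen_atlChain_step (.inl hs) hst, chainVal]
    omega

-- State `2 (k - j) + 1` is `a_{2(k-j)}`; for `j = k` the arithmetic would select `b`, excluded.
theorem asat_atlChain_chiA_iff (j : ℕ) (s : Fin (2 * k + 2)) :
    asat (atlChain Ag k hk) (chiA Ag j) s ↔
      (s.val = 0 ∧ j = k) ∨ (s.val ≠ 1 ∧ s.val + 2 * j = 2 * k + 1) := by
  induction j generalizing s with
  | zero =>
    rw [chiA, asat_atlChain_cbox_empty_var_zero_iff]
    omega
  | succ j ih =>
    simp only [chiA, asat_conj, asat_neg, asat_atlChain_var_zero, asat_atlChain_cnext_univ_iff,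
      ih, Bool.exists_bool, val_chainSucc_true, val_chainSucc_false, chainVal]
    have := s.isLt
    split_ifs <;> simp_all <;> omega

theorem asat_atlChain_cnext_univ_cbox_empty_neg_var_zero_iff (s : Fin (2 * k + 2)) :
    asat (atlChain Ag k hk) (.cnext Set.univ (.cbox ∅ (ATL.neg (.var 0)))) s ↔ s.val ≤ 1 := by
  simp only [asat_atlChain_cnext_univ_iff, asat_atlChain_cbox_empty_neg_var_zero_iff,
    Bool.exists_bool, val_chainSucc_true, val_chainSucc_false]
  have := s.isLt
  split_ifs <;> omega

end ChainModel

theorem atl_chain_model_Aform_general (Ag : Type) [Nonempty Ag]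
    (m k : ℕ) (hk : 1 ≤ k) (x : Fin (2 * k + 2)) :
    asat (atlChain Ag k hk) (AformA Ag m) x ↔ k = m ∧ x.val = 0 := by
  rw [AformA, asat_conj, asat_atlChain_chiA_iff,
    asat_atlChain_cnext_univ_cbox_empty_neg_var_zero_iff]
  omega

/-- In the concurrent game chain model M'_k, the one-variable ATL formula A'_m is
true at a state x iff k = m and x is the root. -/
theorem atl_chain_model_Aform (Ag : Type) [Fintype Ag] [Nonempty Ag]
    (m k : ℕ) (hm : 1 ≤ m) (hk : 1 ≤ k) (x : Fin (2 * k + 2)) :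
    asat (atlChain Ag k hk) (AformA Ag m) x ↔ k = m ∧ x.val = 0 :=
  atl_chain_model_Aform_general Ag m k hk x
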